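/- arXiv:1709.03783 — 2 statements merged into one kernel-verified Lean document; each statement's English description precedes it below -/
import Mathlib

section
/- Consider the homogeneous periodic system of matrix equations with s = H (conjugate transpose): A_k X_k B_k − C_k X_{k+1} D_k = 0 for k = 1,…,r−1 and A_r X_r B_r − C_r X_1^H D_r = 0, where all matrices are n×n complex. This system has only the trivial solution X_1 = ⋯ = X_r = 0 if and only if the doubled linear system A_k X_k B_k − C_k X_{k+1} D_k = 0 (k = 1,…,r−1), A_r X_r B_r − C_r X_{r+1} D_r = 0, B_k^H X_{r+k} A_k^H − D_k^H X_{r+k+1} C_k^H = 0 (k = 1,…,r−1), B_r^H X_{2r} A_r^H − D_r^H X_1 C_r^H = 0, in the 2r unknowns X_1,…,X_{2r}, has only the trivial solution. -/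
/-!
If `X` solves the periodic system with the closing unknown `X₀⋆`, then `(X, X⋆)` solves the
doubled system. Conversely, a solution `Y` of the doubled system folds to the solution
`k ↦ Y k + (Y (r + k))⋆` of the periodic one. When the periodic system is trivial this fold
vanishes, so `(Y 0)⋆ = -Y r`, and then `i • Y` is again a solution of the periodic system,
because `i⋆ = -i` compensates the sign. Hence the first half of `Y` vanishes, and with it
the second.
-/

open Matrix

namespace PeriodicStarSystem

variable {R : Type*} [Ring R] [StarRing R]

theorem star_sandwich_sub_eq_zero {a b c d x y : R} (h : a * x * b - c * y * d = 0) :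
    star b * star x * star a - star d * star y * star c = 0 := by
  simpa only [star_sub, star_mul, mul_assoc, star_zero] using congrArg star h

section

variable (r : ℕ) (A B C D : ℕ → R)

def IsSolution (X : ℕ → R) : Prop :=
  (∀ k < r - 1, A k * X k * B k - C k * X (k + 1) * D k = 0) ∧
    A (r - 1) * X (r - 1) * B (r - 1) - C (r - 1) * star (X 0) * D (r - 1) = 0

def IsDoubledSolution (Y : ℕ → R) : Prop :=
  (∀ k < r - 1, A k * Y k * B k - C k * Y (k + 1) * D k = 0) ∧
    A (r - 1) * Y (r - 1) * B (r - 1) - C (r - 1) * Y r * D (r - 1) = 0 ∧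
    (∀ k < r - 1,
      star (B k) * Y (r + k) * star (A k) - star (D k) * Y (r + k + 1) * star (C k) = 0) ∧
    star (B (r - 1)) * Y (2 * r - 1) * star (A (r - 1)) -
      star (D (r - 1)) * Y 0 * star (C (r - 1)) = 0

end

variable {r : ℕ} {A B C D : ℕ → R}

def toDoubled (r : ℕ) (X : ℕ → R) (j : ℕ) : R :=
  if j < r then X j else star (X (j - r))

def ofDoubled (r : ℕ) (Y : ℕ → R) (k : ℕ) : R :=
  Y k + star (Y (r + k))

theorem IsSolution.isDoubledSolution_toDoubled {X : ℕ → R} (hr : 1 ≤ r)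
    (hX : IsSolution r A B C D X) :
    IsDoubledSolution r A B C D (toDoubled r X) := by
  obtain ⟨hstep, hclose⟩ := hX
  have low : ∀ j < r, toDoubled r X j = X j := fun j hj => if_pos hj
  have high : ∀ k, toDoubled r X (r + k) = star (X k) := fun k => by simp [toDoubled]
  refine ⟨fun k hk => ?_, ?_, fun k hk => ?_, ?_⟩
  · rw [low k (by omega), low (k + 1) (by omega)]
    exact hstep k hk
  · rw [low (r - 1) (by omega), show toDoubled r X r = star (X 0) by simpa using high 0]
    exact hclose
  · rw [high, add_assoc, high]
    exact star_sandwich_sub_eq_zero (hstep k hk)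
  · rw [show 2 * r - 1 = r + (r - 1) by omega, high, low 0 hr]
    simpa only [star_star] using star_sandwich_sub_eq_zero hclose

theorem IsDoubledSolution.isSolution_ofDoubled {Y : ℕ → R} (hY : IsDoubledSolution r A B C D Y) :
    IsSolution r A B C D (ofDoubled r Y) := by
  obtain ⟨hstep, hclose, hstepStar, hcloseStar⟩ := hY
  constructor
  · intro k hk
    have hstar := by simpa only [star_star] using star_sandwich_sub_eq_zero (hstepStar k hk)
    calc A k * ofDoubled r Y k * B k - C k * ofDoubled r Y (k + 1) * D k
        = (A k * Y k * B k - C k * Y (k + 1) * D k)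
          + (A k * star (Y (r + k)) * B k - C k * star (Y (r + k + 1)) * D k) := by
          simp only [ofDoubled]; noncomm_ring
      _ = 0 := by rw [hstep k hk, hstar, add_zero]
  · rw [show 2 * r - 1 = r + (r - 1) by omega] at hcloseStar
    have hstar := by simpa only [star_star] using star_sandwich_sub_eq_zero hcloseStar
    calc A (r - 1) * ofDoubled r Y (r - 1) * B (r - 1)
          - C (r - 1) * star (ofDoubled r Y 0) * D (r - 1)
        = (A (r - 1) * Y (r - 1) * B (r - 1) - C (r - 1) * Y r * D (r - 1))
          + (A (r - 1) * star (Y (r + (r - 1))) * B (r - 1)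
            - C (r - 1) * star (Y 0) * D (r - 1)) := by
          simp only [ofDoubled, star_add, star_star, add_zero]; noncomm_ring
      _ = 0 := by rw [hclose, hstar, add_zero]

variable [Algebra ℂ R] [StarModule ℂ R]

theorem IsDoubledSolution.isSolution_I_smul {Y : ℕ → R} (hY : IsDoubledSolution r A B C D Y)
    (hY0 : star (Y 0) = -Y r) : IsSolution r A B C D (fun k => Complex.I • Y k) := by
  obtain ⟨hstep, hclose, -, -⟩ := hY
  have hstarI : star (Complex.I • Y 0) = Complex.I • Y r := by
    rw [star_smul, hY0, Complex.star_def, Complex.conj_I, neg_smul, smul_neg, neg_neg]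
  refine ⟨fun k hk => ?_, ?_⟩
  · simp only [mul_smul_comm, smul_mul_assoc, ← smul_sub, hstep k hk, smul_zero]
  · simp only [hstarI, mul_smul_comm, smul_mul_assoc, ← smul_sub, hclose, smul_zero]

theorem trivial_iff_doubled_trivial (hr : 1 ≤ r) :
    (∀ X, IsSolution r A B C D X → ∀ k < r, X k = 0) ↔
      (∀ Y, IsDoubledSolution r A B C D Y → ∀ k < 2 * r, Y k = 0) := by
  constructor
  · intro htriv Y hY
    have hfold : ∀ k < r, Y k + star (Y (r + k)) = 0 := htriv _ hY.isSolution_ofDoubled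
    have hY0 : star (Y 0) = -Y r := by
      rw [eq_neg_of_add_eq_zero_left (hfold 0 hr), star_neg, star_star, add_zero]
    have hlow : ∀ k < r, Y k = 0 := fun k hk =>
      (smul_eq_zero.mp (htriv _ (hY.isSolution_I_smul hY0) k hk)).resolve_left Complex.I_ne_zero
    intro k hk
    rcases lt_or_ge k r with hkr | hrk
    · exact hlow k hkr
    · have h := hfold (k - r) (by omega)
      rwa [hlow (k - r) (by omega), zero_add, Nat.add_sub_cancel' hrk, star_eq_zero] at h
  · intro htriv X hX k hk
    simpa [toDoubled, hk] using htriv _ (hX.isDoubledSolution_toDoubled hr) k (by omega)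

end PeriodicStarSystem

open PeriodicStarSystem in
/-- The homogeneous periodic system with `s = H` has only the trivial solution iff the
doubled linear system (in `2r` unknowns, obtained by adjoining the conjugate-transposed
equations) has only the trivial solution. Indices are 0-based: equations `k = 0,…,r-2`
plus a closing equation. -/
theorem stmt_7 (n r : ℕ) (hr : 1 ≤ r) (A B C D : ℕ → Matrix (Fin n) (Fin n) ℂ) :
    (∀ X : ℕ → Matrix (Fin n) (Fin n) ℂ,
        (∀ k < r - 1, A k * X k * B k - C k * X (k + 1) * D k = 0) →
        A (r - 1) * X (r - 1) * B (r - 1) - C (r - 1) * (X 0)ᴴ * D (r - 1) = 0 →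
        ∀ k < r, X k = 0) ↔
    (∀ Y : ℕ → Matrix (Fin n) (Fin n) ℂ,
        (∀ k < r - 1, A k * Y k * B k - C k * Y (k + 1) * D k = 0) →
        A (r - 1) * Y (r - 1) * B (r - 1) - C (r - 1) * Y r * D (r - 1) = 0 →
        (∀ k < r - 1,
          (B k)ᴴ * Y (r + k) * (A k)ᴴ - (D k)ᴴ * Y (r + k + 1) * (C k)ᴴ = 0) →
        (B (r - 1))ᴴ * Y (2 * r - 1) * (A (r - 1))ᴴ -
            (D (r - 1))ᴴ * Y 0 * (C (r - 1))ᴴ = 0 →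
        ∀ k < 2 * r, Y k = 0) := by
  simpa only [IsSolution, IsDoubledSolution, and_imp, star_eq_conjTranspose] using
    trivial_iff_doubled_trivial (A := A) (B := B) (C := C) (D := D) hr
end

section
/- Let y = (N + ΔN)·x with N, ΔN ∈ ℂ^{m×m}, x, y ∈ ℂ^m nonzero, and ‖ΔN‖₂ ≤ ε‖N‖₂ for some ε > 0. Let δy ∈ ℂ^m satisfy ‖δy‖₂ ≤ κ‖y‖₂ for some κ > 0. Then there exists δN ∈ ℂ^{m×m} with y + δy = (N + δN)·x and ‖δN‖₂ ≤ (ε + κ(1 + ε))·‖N‖₂. -/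
/-!
The output error `δy` is absorbed into the matrix by the rank-one correction
`T := δy ⟪x, ·⟫ / ‖x‖²`, which maps `x` to `δy` and has norm `‖δy‖ / ‖x‖`. Since
`‖y‖ ≤ ‖N + ΔN‖ ‖x‖ ≤ (1 + ε) ‖N‖ ‖x‖`, this norm is at most `κ (1 + ε) ‖N‖`, and the triangle
inequality for `δN := ΔN + T` gives the bound. The L2 operator norm of a matrix is by definition
that of the corresponding operator on Euclidean space, so the matrix statement is a transport.
-/

open scoped Matrix.Norms.L2Operator

open InnerProductSpace

section Operator

variable {𝕜 E F : Type*} [RCLike 𝕜] [NormedAddCommGroup E] [InnerProductSpace 𝕜 E]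
  [NormedAddCommGroup F] [NormedSpace 𝕜 F]

theorem exists_clm_apply_eq_norm_eq_div {x : E} (hx : x ≠ 0) (v : F) :
    ∃ T : E →L[𝕜] F, T x = v ∧ ‖T‖ = ‖v‖ / ‖x‖ := by
  have hx' : (‖x‖ : 𝕜) ≠ 0 := by exact_mod_cast norm_ne_zero_iff.mpr hx
  refine ⟨rankOne 𝕜 (((‖x‖ : 𝕜) ^ 2)⁻¹ • v) x, ?_, ?_⟩
  · rw [rankOne_apply, inner_self_eq_norm_sq_to_K, smul_smul, mul_inv_cancel₀ (pow_ne_zero 2 hx'),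
      one_smul]
  · rw [norm_rankOne, norm_smul, norm_inv, norm_pow, RCLike.norm_ofReal, abs_norm]
    field_simp [norm_ne_zero_iff.mpr hx]

theorem exists_perturbation_apply_eq_add {N ΔN : E →L[𝕜] F} {x : E} {y δy : F} {ε κ : ℝ}
    (hκ : 0 ≤ κ) (hx : x ≠ 0) (hyx : y = (N + ΔN) x) (hΔN : ‖ΔN‖ ≤ ε * ‖N‖)
    (hδy : ‖δy‖ ≤ κ * ‖y‖) :
    ∃ δN : E →L[𝕜] F, y + δy = (N + δN) x ∧ ‖δN‖ ≤ (ε + κ * (1 + ε)) * ‖N‖ := by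
  obtain ⟨T, hTx, hT⟩ := exists_clm_apply_eq_norm_eq_div (𝕜 := 𝕜) hx δy
  have hy : ‖y‖ ≤ (1 + ε) * ‖N‖ * ‖x‖ :=
    calc ‖y‖ ≤ ‖N + ΔN‖ * ‖x‖ := hyx ▸ (N + ΔN).le_opNorm x
      _ ≤ (‖N‖ + ‖ΔN‖) * ‖x‖ := by gcongr; exact norm_add_le N ΔN
      _ ≤ (1 + ε) * ‖N‖ * ‖x‖ := by gcongr; linarith
  have hTN : ‖T‖ ≤ κ * (1 + ε) * ‖N‖ := by
    have hxpos : 0 < ‖x‖ := norm_pos_iff.mpr hx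
    rw [hT, div_le_iff₀ hxpos]
    calc ‖δy‖ ≤ κ * ‖y‖ := hδy
      _ ≤ κ * ((1 + ε) * ‖N‖ * ‖x‖) := by gcongr
      _ = κ * (1 + ε) * ‖N‖ * ‖x‖ := by ring
  refine ⟨ΔN + T, ?_, ?_⟩
  · rw [← add_assoc, add_apply, hTx, hyx]
  · calc ‖ΔN + T‖ ≤ ‖ΔN‖ + ‖T‖ := norm_add_le ΔN T
      _ ≤ ε * ‖N‖ + κ * (1 + ε) * ‖N‖ := add_le_add hΔN hTN
      _ = (ε + κ * (1 + ε)) * ‖N‖ := by ring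

end Operator

theorem stmt_18_general (m : ℕ) (N ΔN : Matrix (Fin m) (Fin m) ℂ)
    (x y δy : EuclideanSpace ℂ (Fin m)) (ε κ : ℝ) (hκ : 0 < κ)
    (hx : x ≠ 0)
    (hyx : y = (N + ΔN).mulVec x)
    (hΔN : ‖ΔN‖ ≤ ε * ‖N‖)
    (hδy : ‖δy‖ ≤ κ * ‖y‖) :
    ∃ δN : Matrix (Fin m) (Fin m) ℂ,
      y + δy = (N + δN).mulVec x ∧ ‖δN‖ ≤ (ε + κ * (1 + ε)) * ‖N‖ := by
  let Φ := Matrix.toEuclideanCLM (n := Fin m) (𝕜 := ℂ)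
  have hyx' : y = (Φ N + Φ ΔN) x := WithLp.ofLp_injective 2 (by rw [← map_add]; exact hyx)
  obtain ⟨T, hT, hTN⟩ := exists_perturbation_apply_eq_add hκ.le hx hyx' hΔN hδy
  refine ⟨Φ.symm T, ?_, ?_⟩
  · rw [← WithLp.ofLp_add, ← Matrix.ofLp_toEuclideanCLM, map_add, StarAlgEquiv.apply_symm_apply,
      ← hT]
  · rwa [← Matrix.l2_opNorm_toEuclideanCLM, StarAlgEquiv.apply_symm_apply]

/-- Backward-error absorption lemma: if `y = (N + ΔN)x` with `‖ΔN‖₂ ≤ ε‖N‖₂` and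
`‖δy‖₂ ≤ κ‖y‖₂`, then `y + δy = (N + δN)x` for some `δN` with
`‖δN‖₂ ≤ (ε + κ(1 + ε))‖N‖₂`. Matrix norms are L2 operator norms and vectors live in
Euclidean space. -/
theorem stmt_18 (m : ℕ) (N ΔN : Matrix (Fin m) (Fin m) ℂ)
    (x y δy : EuclideanSpace ℂ (Fin m)) (ε κ : ℝ) (hε : 0 < ε) (hκ : 0 < κ)
    (hx : x ≠ 0) (hy : y ≠ 0)
    (hyx : y = (N + ΔN).mulVec x)
    (hΔN : ‖ΔN‖ ≤ ε * ‖N‖)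
    (hδy : ‖δy‖ ≤ κ * ‖y‖) :
    ∃ δN : Matrix (Fin m) (Fin m) ℂ,
      y + δy = (N + δN).mulVec x ∧ ‖δN‖ ≤ (ε + κ * (1 + ε)) * ‖N‖ :=
  stmt_18_general m N ΔN x y δy ε κ hκ hx hyx hΔN hδy
end
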